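/- Suppose K : (0,∞) → [0,∞) is locally integrable, eventually decreasing with K(t) → 0 at infinity, and there exist α ∈ (0,1), C_α > 0, β_α > 0 with |t^α K(t) − C_α| = O(t^{-β_α}) as t → ∞. Then, with γ_α = min{1−α, α·β_α}, one has |ω^{1−α} K_cos(ω) − C_α ∫₀^∞ cos(z)/z^α dz| = O(ω^{γ_α}) as ω → 0⁺. -/

import Mathlib

/-!
Write `K = C t^(-α) + (K - C t^(-α))` and cut both cosine transforms at `B = ω^(-(1+β))`.
Beyond `B` the functions `K` and `t^(-α)` are nonnegative and decreasing, so by the second mean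
value theorem their oscillatory tails are `O(f(B) / ω)`; after the factor `ω^(1-α)` this is
`O(ω^(αβ))`.
Below `B`, the substitution `z = ω t` turns `C ∫ cos z / z^α` into `C ω^(1-α) ∫ t^(-α) cos (ω t)`,
so what is left is at most `ω^(1-α) ∫₀^B |K - C t^(-α)|`. The rate hypothesis bounds this integral
by `M₁ + M₂ B^(1-p)` for a suitable `p ≤ α + β`, which gives `O(ω^(1-α)) + O(ω^(αβ))`.
-/

open MeasureTheory Filter Set Real Asymptotics
open intervalIntegral Topology

section Oscillation

variable {f : ℝ → ℝ} {a ω : ℝ}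

lemma AntitoneOn.intervalIntegrable_of_Ici (hf : AntitoneOn f (Ici a)) {u v : ℝ}
    (hu : a ≤ u) (hv : a ≤ v) : IntervalIntegrable f volume u v :=
  (hf.mono fun _ ht => le_trans (le_min hu hv) ht.1).intervalIntegrable

lemma abs_integral_mul_cos_le_integral_abs {u v : ℝ} (huv : u ≤ v)
    (hf : IntervalIntegrable f volume u v) :
    |∫ t in u..v, f t * cos (ω * t)| ≤ ∫ t in u..v, |f t| := by
  refine (norm_integral_le_of_norm_le (f := fun t => f t * cos (ω * t)) huv
    (Eventually.of_forall fun t _ => ?_) hf.abs :)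
  rw [norm_mul, Real.norm_eq_abs]
  exact mul_le_of_le_one_right (abs_nonneg _) (abs_cos_le_one _)

lemma abs_integral_mul_cos_le_integral {u v : ℝ} (huv : u ≤ v)
    (hf0 : ∀ t ∈ Icc u v, 0 ≤ f t) (hf : IntervalIntegrable f volume u v) :
    |∫ t in u..v, f t * cos (ω * t)| ≤ ∫ t in u..v, f t :=
  (abs_integral_mul_cos_le_integral_abs huv hf).trans_eq <| integral_congr fun t ht =>
    abs_of_nonneg (hf0 t (by rwa [uIcc_of_le huv] at ht))

lemma AntitoneOn.integral_le_mul (hf : AntitoneOn f (Ici a)) {u P : ℝ} (hu : a ≤ u)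
    (hP : 0 ≤ P) : ∫ t in u..u + P, f t ≤ P * f u := by
  have := integral_mono_on (le_add_of_nonneg_right hP)
    (hf.intervalIntegrable_of_Ici hu (by linarith)) intervalIntegrable_const
    fun t ht => hf hu (hu.trans ht.1) ht.1
  simpa using this

lemma abs_integral_mul_cos_add_integral_shift_le (hω : 0 < ω) {b : ℝ} (hab : a ≤ b)
    (hf : AntitoneOn f (Ici a)) (hf0 : ∀ t ∈ Ici a, 0 ≤ f t) :
    |(∫ t in a..b, f t * cos (ω * t)) + ∫ t in a + π / ω..b + π / ω, f t * cos (ω * t)|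
      ≤ π / ω * f a := by
  set P := π / ω
  have hP : 0 ≤ P := by positivity
  have hint : ∀ u v, a ≤ u → a ≤ v → IntervalIntegrable f volume u v :=
    fun u v => hf.intervalIntegrable_of_Ici
  have hintP : IntervalIntegrable (fun t => f (t + P)) volume a b :=
    AntitoneOn.intervalIntegrable_of_Ici (a := a) (fun x hx y hy hxy =>
      hf (mem_Ici.2 (by linarith [mem_Ici.1 hx])) (mem_Ici.2 (by linarith [mem_Ici.1 hy]))
        (by linarith)) le_rfl hab
  have hshift : (∫ t in a..b, f t * cos (ω * t)) + ∫ t in a + P..b + P, f t * cos (ω * t)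
      = ∫ t in a..b, (f t - f (t + P)) * cos (ω * t) := by
    have hcos : ∀ t, cos (ω * (t + P)) = -cos (ω * t) := fun t => by
      rw [mul_add, mul_div_cancel₀ _ hω.ne', cos_add_pi]
    simp only [← integral_comp_add_right _ P, hcos, sub_mul, mul_neg]
    rw [integral_sub ((hint a b le_rfl hab).mul_continuousOn (by fun_prop))
      (hintP.mul_continuousOn (by fun_prop)), intervalIntegral.integral_neg, sub_eq_add_neg]
  have hdec : ∀ t ∈ Icc a b, 0 ≤ f t - f (t + P) := fun t ht =>
    sub_nonneg.2 (hf ht.1 (ht.1.trans (by linarith)) (by linarith))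
  have htel : ∫ t in a..b, (f t - f (t + P))
      = (∫ t in a..a + P, f t) - ∫ t in b..b + P, f t := by
    rw [integral_sub (hint a b le_rfl hab) hintP, integral_comp_add_right,
      integral_interval_sub_interval_comm (hint a b le_rfl hab)
        (hint _ _ (by linarith) (by linarith)) (hint _ _ le_rfl (by linarith))]
  have hnonneg : 0 ≤ ∫ t in b..b + P, f t :=
    integral_nonneg (by linarith) fun t ht => hf0 t (hab.trans ht.1)
  rw [hshift]
  refine (abs_integral_mul_cos_le_integral hab hdec ((hint a b le_rfl hab).sub hintP)).trans ?_
  linarith [hf.integral_le_mul le_rfl hP]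

/-- The second mean value theorem, up to a constant: pairing `t` with `t + π / ω`, where
`cos (ω * t)` changes sign, leaves only two half-periods next to the endpoints. -/
lemma abs_integral_mul_cos_le_of_antitoneOn (hω : 0 < ω) {b : ℝ} (hab : a ≤ b)
    (hf : AntitoneOn f (Ici a)) (hf0 : ∀ t ∈ Ici a, 0 ≤ f t) :
    |∫ t in a..b, f t * cos (ω * t)| ≤ 3 * π / (2 * ω) * f a := by
  have hpair := abs_integral_mul_cos_add_integral_shift_le hω hab hf hf0
  set P := π / ω
  have hP : 0 ≤ P := by positivity
  have hintc : ∀ u v, a ≤ u → a ≤ v →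
      IntervalIntegrable (fun t => f t * cos (ω * t)) volume u v :=
    fun u v hu hv => (hf.intervalIntegrable_of_Ici hu hv).mul_continuousOn (by fun_prop)
  have hhalf : ∀ u, a ≤ u → |∫ t in u..u + P, f t * cos (ω * t)| ≤ P * f a := fun u hu =>
    (abs_integral_mul_cos_le_integral (by linarith) (fun t ht => hf0 t (hu.trans ht.1))
      (hf.intervalIntegrable_of_Ici hu (by linarith))).trans
      ((hf.integral_le_mul hu hP).trans (mul_le_mul_of_nonneg_left (hf self_mem_Ici hu hu) hP))
  have hends : (∫ t in a..b, f t * cos (ω * t)) - ∫ t in a + P..b + P, f t * cos (ω * t)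
      = (∫ t in a..a + P, f t * cos (ω * t)) - ∫ t in b..b + P, f t * cos (ω * t) :=
    integral_interval_sub_interval_comm (hintc a b le_rfl hab)
      (hintc _ _ (by linarith) (by linarith)) (hintc _ _ le_rfl (by linarith))
  have ha := hhalf a le_rfl
  have hb := hhalf b hab
  have h3 : 3 * π / (2 * ω) * f a = 3 / 2 * (P * f a) := by
    simp only [P]; field_simp
  rw [h3]
  rw [abs_le] at hpair ha hb ⊢
  constructor <;> linarith

lemma abs_integral_sub_mul_cos_le {g : ℝ → ℝ} {C B T : ℝ} (hω : 0 < ω) (haB : a ≤ B)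
    (hBT : B ≤ T) (hf : AntitoneOn f (Ici B)) (hf0 : ∀ t ∈ Ici B, 0 ≤ f t)
    (hg : AntitoneOn g (Ici B)) (hg0 : ∀ t ∈ Ici B, 0 ≤ g t)
    (hint : IntervalIntegrable (fun t => f t - C * g t) volume a B) :
    |∫ t in a..T, (f t - C * g t) * cos (ω * t)|
      ≤ (∫ t in a..B, |f t - C * g t|) + 3 * π / (2 * ω) * (f B + |C| * g B) := by
  have hfT := hf.intervalIntegrable_of_Ici le_rfl hBT
  have hgT := hg.intervalIntegrable_of_Ici le_rfl hBT
  have htail : ∫ t in B..T, (f t - C * g t) * cos (ω * t)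
      = (∫ t in B..T, f t * cos (ω * t)) - C * ∫ t in B..T, g t * cos (ω * t) := by
    rw [← intervalIntegral.integral_const_mul, ← integral_sub (hfT.mul_continuousOn (by fun_prop))
      ((hgT.mul_continuousOn (by fun_prop)).const_mul C)]
    exact integral_congr fun t _ => by ring
  rw [← integral_add_adjacent_intervals (hint.mul_continuousOn (by fun_prop))
    ((hfT.sub (hgT.const_mul C)).mul_continuousOn (by fun_prop)), htail]
  calc _ ≤ |∫ t in a..B, (f t - C * g t) * cos (ω * t)|
        + (|∫ t in B..T, f t * cos (ω * t)| + |C| * |∫ t in B..T, g t * cos (ω * t)|) := by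
        rw [← abs_mul]; exact (abs_add_le _ _).trans (by gcongr; exact abs_sub _ _)
    _ ≤ (∫ t in a..B, |f t - C * g t|)
        + (3 * π / (2 * ω) * f B + |C| * (3 * π / (2 * ω) * g B)) := by
        gcongr
        · exact abs_integral_mul_cos_le_integral_abs haB hint
        · exact abs_integral_mul_cos_le_of_antitoneOn hω hBT hf hf0
        · exact abs_integral_mul_cos_le_of_antitoneOn hω hBT hg hg0
    _ = _ := by ring

end Oscillation

lemma integral_cos_div_rpow {α T : ℝ} (hT : 0 ≤ T) :
    ∫ z in 0..T, cos z / z ^ α = ∫ z in 0..T, z ^ (-α) * cos z :=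
  integral_congr fun z hz => by
    rw [uIcc_of_le hT] at hz
    rw [rpow_neg hz.1, div_eq_inv_mul]

lemma integral_rpow_mul_cos_mul {α ω T : ℝ} (hω : 0 < ω) (hT : 0 ≤ T) :
    ∫ t in 0..T, t ^ (-α) * cos (ω * t) = ω ^ (α - 1) * ∫ z in 0..ω * T, z ^ (-α) * cos z := by
  have hcomp : ∀ t ∈ uIcc 0 T, t ^ (-α) * cos (ω * t) = ω ^ α * ((ω * t) ^ (-α) * cos (ω * t)) :=
    fun t ht => by
      rw [uIcc_of_le hT] at ht
      rw [mul_rpow hω.le ht.1, ← mul_assoc, ← mul_assoc, ← rpow_add hω, add_neg_cancel,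
        rpow_zero, one_mul]
  rw [integral_congr hcomp, intervalIntegral.integral_const_mul,
    integral_comp_mul_left (fun z => z ^ (-α) * cos z) hω.ne', mul_zero, smul_eq_mul,
    ← mul_assoc, ← rpow_neg_one, ← rpow_add hω, sub_eq_add_neg]

lemma tendsto_integral_rpow_mul_cos_mul {α ω I : ℝ} (hω : 0 < ω)
    (hI : Tendsto (fun T => ∫ z in 0..T, z ^ (-α) * cos z) atTop (𝓝 I)) :
    Tendsto (fun T => ∫ t in 0..T, t ^ (-α) * cos (ω * t)) atTop (𝓝 (ω ^ (α - 1) * I)) :=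
  ((hI.comp (tendsto_id.const_mul_atTop hω)).const_mul _).congr' <| by
    filter_upwards [eventually_ge_atTop 0] with T hT using (integral_rpow_mul_cos_mul hω hT).symm

lemma abs_rpow_mul_sub_le {K : ℝ → ℝ} {α C ω B Kc I : ℝ} (hα0 : 0 ≤ α) (hα1 : α < 1)
    (hω : 0 < ω) (hB : 0 < B) (hanti : AntitoneOn K (Ici B)) (hK0 : ∀ t ∈ Ici B, 0 ≤ K t)
    (hK : ∀ T ≥ 0, IntervalIntegrable K volume 0 T)
    (hKc : Tendsto (fun T => ∫ t in 0..T, K t * cos (ω * t)) atTop (𝓝 Kc))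
    (hI : Tendsto (fun T => ∫ z in 0..T, z ^ (-α) * cos z) atTop (𝓝 I)) :
    |ω ^ (1 - α) * Kc - C * I|
      ≤ ω ^ (1 - α) * ((∫ t in 0..B, |K t - C * t ^ (-α)|)
        + 3 * π / (2 * ω) * (K B + |C| * B ^ (-α))) := by
  have hrpow : ∀ T, IntervalIntegrable (fun t : ℝ => t ^ (-α)) volume 0 T := fun T =>
    intervalIntegrable_rpow' (by linarith)
  have hlim : Tendsto (fun T => ∫ t in 0..T, (K t - C * t ^ (-α)) * cos (ω * t)) atTop
      (𝓝 (Kc - C * (ω ^ (α - 1) * I))) := by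
    refine (hKc.sub ((tendsto_integral_rpow_mul_cos_mul hω hI).const_mul C)).congr' ?_
    filter_upwards [eventually_ge_atTop 0] with T hT
    rw [← intervalIntegral.integral_const_mul, ← integral_sub
      ((hK T hT).mul_continuousOn (by fun_prop))
      (((hrpow T).mul_continuousOn (by fun_prop)).const_mul C)]
    exact integral_congr fun t _ => by ring
  have hrpow_anti : AntitoneOn (fun t : ℝ => t ^ (-α)) (Ici B) := fun x hx y _ hxy =>
    rpow_le_rpow_of_nonpos (hB.trans_le hx) hxy (by linarith)
  have hbound := le_of_tendsto hlim.abs <| by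
    filter_upwards [eventually_ge_atTop B] with T hT
    exact abs_integral_sub_mul_cos_le hω hB.le hT hanti hK0 hrpow_anti
      (fun t ht => rpow_nonneg (hB.le.trans ht) _) ((hK B hB.le).sub ((hrpow B).const_mul C))
  have hscale : ω ^ (1 - α) * Kc - C * I = ω ^ (1 - α) * (Kc - C * (ω ^ (α - 1) * I)) := by
    rw [mul_sub, mul_left_comm, ← mul_assoc (ω ^ (1 - α)), ← rpow_add hω, sub_add_sub_cancel',
      sub_self, rpow_zero, one_mul]
  rw [hscale, abs_mul, abs_of_pos (rpow_pos_of_pos hω _)]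
  exact mul_le_mul_of_nonneg_left hbound (rpow_nonneg hω.le _)

lemma isBigO_sub_mul_rpow {K : ℝ → ℝ} {α β C : ℝ}
    (h : (fun t => t ^ α * K t - C) =O[atTop] fun t => t ^ (-β)) :
    (fun t => K t - C * t ^ (-α)) =O[atTop] fun t => t ^ (-(α + β)) := by
  refine ((isBigO_refl (fun t : ℝ => t ^ (-α)) atTop).mul h).congr' ?_ ?_ <;>
    filter_upwards [eventually_gt_atTop 0] with t ht
  · rw [mul_sub, ← mul_assoc, ← rpow_add ht, neg_add_cancel, rpow_zero, one_mul, mul_comm]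
  · rw [← rpow_add ht, neg_add]

lemma exists_forall_ge_abs_sub_mul_rpow_le {K : ℝ → ℝ} {α β C : ℝ}
    (h : (fun t => t ^ α * K t - C) =O[atTop] fun t => t ^ (-β)) (A₀ : ℝ) :
    ∃ c ≥ 0, ∃ A ≥ max A₀ 1, ∀ t ≥ A, |K t - C * t ^ (-α)| ≤ c * t ^ (-(α + β)) := by
  obtain ⟨c, hc, hO⟩ := (isBigO_sub_mul_rpow h).exists_pos
  obtain ⟨A, hA⟩ := eventually_atTop.1 (hO.bound.and (eventually_ge_atTop (max A₀ 1)))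
  refine ⟨c, hc.le, A, (hA A le_rfl).2, fun t ht => ?_⟩
  have ht0 : 0 ≤ t := zero_le_one.trans ((le_max_right _ _).trans ((hA A le_rfl).2.trans ht))
  simpa [abs_of_nonneg (rpow_nonneg ht0 _)] using (hA t ht).1

lemma intervalIntegrable_zero_of_locallyIntegrableOn_Ioi {K : ℝ → ℝ}
    (hloc : LocallyIntegrableOn K (Ioi 0)) (hint0 : IntegrableOn K (Ioc 0 1)) {T : ℝ}
    (hT : 0 ≤ T) : IntervalIntegrable K volume 0 T := by
  rw [intervalIntegrable_iff_integrableOn_Ioc_of_le hT]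
  have h1T : IntegrableOn K (Icc 1 T) :=
    hloc.integrableOn_compact_subset (fun t ht => zero_lt_one.trans_le ht.1) isCompact_Icc
  refine (hint0.union h1T).mono_set fun t ht => ?_
  exact (le_or_gt t 1).imp (fun h => ⟨ht.1, h⟩) fun h => ⟨h.le, ht.2⟩

lemma exists_integral_abs_le_of_le_rpow {g : ℝ → ℝ} {A c p : ℝ} (hA : 0 < A) (hp : p ≠ 1)
    (hg : ∀ B ≥ A, IntervalIntegrable g volume 0 B) (hgA : ∀ t ≥ A, |g t| ≤ c * t ^ (-p)) :
    ∃ M₁ M₂ : ℝ, ∀ B ≥ A, ∫ t in 0..B, |g t| ≤ M₁ + M₂ * B ^ (1 - p) := by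
  refine ⟨(∫ t in 0..A, |g t|) - c / (1 - p) * A ^ (1 - p), c / (1 - p), fun B hB => ?_⟩
  have h0 : (0 : ℝ) ∉ uIcc A B := by rw [uIcc_of_le hB]; exact fun h => hA.not_ge h.1
  have hrpow : IntervalIntegrable (fun t => c * t ^ (-p)) volume A B :=
    (intervalIntegral.intervalIntegrable_rpow (Or.inr h0)).const_mul c
  have htail : ∫ t in A..B, |g t| ≤ ∫ t in A..B, c * t ^ (-p) :=
    integral_mono_on hB ((hg A le_rfl).symm.trans (hg B hB)).abs hrpow
      fun t ht => hgA t ht.1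
  rw [← integral_add_adjacent_intervals (hg A le_rfl).abs ((hg A le_rfl).symm.trans (hg B hB)).abs]
  rw [intervalIntegral.integral_const_mul,
    integral_rpow (Or.inr ⟨fun h => hp (by linarith [neg_inj.1 h]), h0⟩)] at htail
  have hexp : -p + 1 = 1 - p := by ring
  rw [hexp] at htail
  have : c * ((B ^ (1 - p) - A ^ (1 - p)) / (1 - p))
      = c / (1 - p) * B ^ (1 - p) - c / (1 - p) * A ^ (1 - p) := by ring
  linarith

/-- The decay exponent used for `K t - C * t ^ (-α)` on `[A, ω ^ (-(1 + β))]`: `p ≠ 1` avoids a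
logarithm in `∫ t ^ (-p)`, and the last inequality says `ω ^ (1 - α) * (ω ^ (-(1 + β))) ^ (1 - p)`
is `O(ω ^ (α * β))`. -/
lemma exists_exponent {α β : ℝ} (hβ : 0 < β) :
    ∃ p ≤ α + β, p ≠ 1 ∧ α * β ≤ 1 - α - (1 + β) * (1 - p) := by
  by_cases h : α + β = 1
  · refine ⟨1 - β ^ 2 / (1 + β), ?_, ?_, ?_⟩
    · rw [h]; linarith [show 0 ≤ β ^ 2 / (1 + β) by positivity]
    · rw [ne_eq, sub_eq_self]; positivity
    · rw [sub_sub_cancel, mul_div_cancel₀ _ (by positivity)]; nlinarith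
  · exact ⟨α + β, le_rfl, h, by nlinarith⟩

lemma exists_integral_abs_sub_mul_rpow_le {K : ℝ → ℝ} {α β C c A : ℝ} (hα1 : α < 1)
    (hβ : 0 < β) (hc : 0 ≤ c) (hA : 1 ≤ A) (hK : ∀ T ≥ 0, IntervalIntegrable K volume 0 T)
    (hrate : ∀ t ≥ A, |K t - C * t ^ (-α)| ≤ c * t ^ (-(α + β))) :
    ∃ p M₁ M₂ : ℝ, α * β ≤ 1 - α - (1 + β) * (1 - p) ∧
      ∀ B ≥ A, ∫ t in 0..B, |K t - C * t ^ (-α)| ≤ M₁ + M₂ * B ^ (1 - p) := by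
  obtain ⟨p, hpβ, hp1, hexp⟩ := exists_exponent (α := α) hβ
  obtain ⟨M₁, M₂, hM⟩ := exists_integral_abs_le_of_le_rpow (g := fun t => K t - C * t ^ (-α))
    (zero_lt_one.trans_le hA) hp1
    (fun B hB => (hK B (zero_le_one.trans (hA.trans hB))).sub
      ((intervalIntegrable_rpow' (by linarith)).const_mul C))
    (fun t ht => (hrate t ht).trans (mul_le_mul_of_nonneg_left
      (rpow_le_rpow_of_exponent_le (hA.trans ht) (by linarith)) hc))
  exact ⟨p, M₁, M₂, hexp, hM⟩

lemma abs_rpow_mul_sub_le_of_rate {K : ℝ → ℝ} {α β C c A p M₁ M₂ ω Kc I : ℝ} (hα0 : 0 ≤ α)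
    (hα1 : α < 1) (hβ : 0 ≤ β) (hc : 0 ≤ c) (hA : 1 ≤ A) (hanti : AntitoneOn K (Ici A))
    (hK0 : ∀ t ∈ Ioi (0:ℝ), 0 ≤ K t) (hK : ∀ T ≥ 0, IntervalIntegrable K volume 0 T)
    (hrate : ∀ t ≥ A, |K t - C * t ^ (-α)| ≤ c * t ^ (-(α + β)))
    (hM : ∀ B ≥ A, ∫ t in 0..B, |K t - C * t ^ (-α)| ≤ M₁ + M₂ * B ^ (1 - p))
    (hω : 0 < ω) (hB : A ≤ ω ^ (-(1 + β)))
    (hKc : Tendsto (fun T => ∫ t in 0..T, K t * cos (ω * t)) atTop (𝓝 Kc))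
    (hI : Tendsto (fun T => ∫ z in 0..T, z ^ (-α) * cos z) atTop (𝓝 I)) :
    |ω ^ (1 - α) * Kc - C * I| ≤ M₁ * ω ^ (1 - α) + M₂ * ω ^ (1 - α - (1 + β) * (1 - p))
      + 3 * π / 2 * (2 * |C| + c) * ω ^ (α * β) := by
  set B := ω ^ (-(1 + β))
  have hB1 : 1 ≤ B := hA.trans hB
  have hBpos : 0 < B := zero_lt_one.trans_le hB1
  have hKB : K B ≤ (|C| + c) * B ^ (-α) := by
    have h1 := (abs_le.1 (hrate B hB)).2
    have h2 : B ^ (-(α + β)) ≤ B ^ (-α) := rpow_le_rpow_of_exponent_le hB1 (by linarith)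
    nlinarith [le_abs_self C, rpow_nonneg hBpos.le (-α)]
  have e1 : ω ^ (1 - α) * B ^ (1 - p) = ω ^ (1 - α - (1 + β) * (1 - p)) := by
    rw [← rpow_mul hω.le, ← rpow_add hω]; congr 1; ring
  have e2 : ω ^ (1 - α) / ω * B ^ (-α) = ω ^ (α * β) := by
    rw [← rpow_sub_one hω.ne', ← rpow_mul hω.le, ← rpow_add hω]; congr 1; ring
  calc _ ≤ ω ^ (1 - α) * ((∫ t in 0..B, |K t - C * t ^ (-α)|)
        + 3 * π / (2 * ω) * (K B + |C| * B ^ (-α))) :=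
        abs_rpow_mul_sub_le hα0 hα1 hω hBpos (hanti.mono (Ici_subset_Ici.2 hB))
          (fun t ht => hK0 t (hBpos.trans_le ht)) hK hKc hI
    _ ≤ ω ^ (1 - α) * (M₁ + M₂ * B ^ (1 - p)
        + 3 * π / (2 * ω) * ((2 * |C| + c) * B ^ (-α))) := by
        gcongr
        · exact hM B hB
        · linarith
    _ = _ := by rw [← e1, ← e2]; ring

lemma isBigO_rpow_rpow_nhdsGT_zero {a b : ℝ} (hab : b ≤ a) :
    (fun x : ℝ => x ^ a) =O[𝓝[>] 0] fun x => x ^ b := by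
  refine IsBigO.of_bound 1 ?_
  filter_upwards [Ioo_mem_nhdsGT (zero_lt_one' ℝ)] with x ⟨hx0, hx1⟩
  rw [one_mul, Real.norm_of_nonneg (rpow_nonneg hx0.le _),
    Real.norm_of_nonneg (rpow_nonneg hx0.le _)]
  exact rpow_le_rpow_of_exponent_ge hx0 hx1.le hab

theorem stmt_8_general (K : ℝ → ℝ) (α Cα βα : ℝ)
    (hα : α ∈ Ioo (0:ℝ) 1) (hβα : 0 < βα)
    (hKnonneg : ∀ t ∈ Ioi (0:ℝ), 0 ≤ K t)
    (hloc : LocallyIntegrableOn K (Ioi 0))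
    (hint0 : IntegrableOn K (Ioc 0 1))
    (hdec : ∃ A > (0:ℝ), AntitoneOn K (Ici A))
    (hrate : (fun t => t ^ α * K t - Cα) =O[atTop] fun t => t ^ (-βα))
    (Kcos : ℝ → ℝ)
    (hKcos : ∀ ω > (0:ℝ),
      Tendsto (fun T => ∫ t in (0:ℝ)..T, K t * Real.cos (ω * t)) atTop (nhds (Kcos ω)))
    (Icos : ℝ)
    (hIcos : Tendsto (fun T => ∫ z in (0:ℝ)..T, Real.cos z / z ^ α) atTop (nhds Icos)) :
    (fun ω => ω ^ (1 - α) * Kcos ω - Cα * Icos) =O[nhdsWithin 0 (Ioi 0)]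
      fun ω => ω ^ min (1 - α) (α * βα) := by
  obtain ⟨hα0, hα1⟩ := hα
  obtain ⟨A₁, -, hanti⟩ := hdec
  obtain ⟨c, hc, A, hA, hrateA⟩ := exists_forall_ge_abs_sub_mul_rpow_le hrate A₁
  have hA1 : 1 ≤ A := le_of_max_le_right hA
  have hK : ∀ T ≥ 0, IntervalIntegrable K volume 0 T := fun T =>
    intervalIntegrable_zero_of_locallyIntegrableOn_Ioi hloc hint0
  have hI : Tendsto (fun T => ∫ z in 0..T, z ^ (-α) * cos z) atTop (𝓝 Icos) :=
    hIcos.congr' <| by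
      filter_upwards [eventually_ge_atTop 0] with T hT using integral_cos_div_rpow hT
  obtain ⟨p, M₁, M₂, hexp, hM⟩ :=
    exists_integral_abs_sub_mul_rpow_le hα1 hβα hc hA1 hK hrateA
  have hbound : ∀ᶠ ω in 𝓝[>] 0, ‖ω ^ (1 - α) * Kcos ω - Cα * Icos‖
      ≤ ‖M₁ * ω ^ (1 - α) + M₂ * ω ^ (1 - α - (1 + βα) * (1 - p))
        + 3 * π / 2 * (2 * |Cα| + c) * ω ^ (α * βα)‖ := by
    filter_upwards [self_mem_nhdsWithin, (tendsto_rpow_neg_nhdsGT_zero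
      (by linarith : -(1 + βα) < 0)).eventually_ge_atTop A] with ω (hω : 0 < ω) hB
    exact (abs_rpow_mul_sub_le_of_rate hα0.le hα1 hβα.le hc hA1
      (hanti.mono (Ici_subset_Ici.2 (le_of_max_le_left hA))) hKnonneg hK hrateA hM hω hB
      (hKcos ω hω) hI).trans (le_abs_self _)
  refine (IsBigO.of_bound' hbound).trans ?_
  exact (((isBigO_rpow_rpow_nhdsGT_zero (min_le_left _ _)).const_mul_left M₁).add
    ((isBigO_rpow_rpow_nhdsGT_zero ((min_le_right _ _).trans hexp)).const_mul_left M₂)).add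
    ((isBigO_rpow_rpow_nhdsGT_zero (min_le_right _ _)).const_mul_left _)

theorem stmt_8 (K : ℝ → ℝ) (α Cα βα : ℝ)
    (hα : α ∈ Ioo (0:ℝ) 1) (hCα : 0 < Cα) (hβα : 0 < βα)
    (hKnonneg : ∀ t ∈ Ioi (0:ℝ), 0 ≤ K t)
    (hloc : LocallyIntegrableOn K (Ioi 0))
    (hint0 : IntegrableOn K (Ioc 0 1))
    (hdec : ∃ A > (0:ℝ), AntitoneOn K (Ici A))
    (hK0 : Tendsto K atTop (nhds 0))
    (hrate : (fun t => t ^ α * K t - Cα) =O[atTop] fun t => t ^ (-βα))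
    (Kcos : ℝ → ℝ)
    (hKcos : ∀ ω > (0:ℝ),
      Tendsto (fun T => ∫ t in (0:ℝ)..T, K t * Real.cos (ω * t)) atTop (nhds (Kcos ω)))
    (Icos : ℝ)
    (hIcos : Tendsto (fun T => ∫ z in (0:ℝ)..T, Real.cos z / z ^ α) atTop (nhds Icos)) :
    (fun ω => ω ^ (1 - α) * Kcos ω - Cα * Icos) =O[nhdsWithin 0 (Ioi 0)]
      fun ω => ω ^ min (1 - α) (α * βα) :=
  stmt_8_general K α Cα βα hα hβα hKnonneg hloc hint0 hdec hrate Kcos hKcos Icos hIcos
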